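/- arXiv:2403.09484 — 9 statements merged into one kernel-verified Lean document; each statement's English description precedes it below -/
import Mathlib

section
/- For any q ∈ (0,1], p ∈ [0,1], and integer n ≥ 1, the combinatorial identity q · Σ_{k=0}^{n-1} [C(n-1,k) p^k (1-p)^{n-1-k} · Σ_{t=0}^{k} C(k,t) q^t (1-q)^{k-t} / (t+1)] = (1 - (1 - q p)^n) / (n p) holds (for p > 0). -/
/-!
Since `C(m, k) / (k + 1) = C(m + 1, k + 1) / (m + 1)`, a sum `x ∑ₖ C(m, k) xᵏ yᵐ⁻ᵏ / (k + 1)` is the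
binomial expansion of `∫₀ˣ (t + y)ᵐ dt = ((x + y)ᵐ⁺¹ - yᵐ⁺¹) / (m + 1)`. The inner sum is of this form
with `x = q`, `y = 1 - q`; once it is evaluated, the outer sum splits into two sums of this form with
`y = 1 - p` and `x = p`, resp. `x = p (1 - q)`, and the two `(1 - p)ᵐ⁺¹` terms cancel.
-/

open Finset

theorem mul_sum_choose_mul_pow_div_succ {K : Type*} [Field K] [CharZero K] (x y : K) (m : ℕ) :
    x * ∑ k ∈ range (m + 1), (m.choose k : K) * x ^ k * y ^ (m - k) / (k + 1)
      = ((x + y) ^ (m + 1) - y ^ (m + 1)) / (m + 1) := by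
  have hexpand : (x + y) ^ (m + 1) - y ^ (m + 1)
      = ∑ k ∈ range (m + 1), ((m + 1).choose (k + 1) : K) * x ^ (k + 1) * y ^ (m - k) := by
    rw [add_pow, sum_range_succ']
    simp only [pow_zero, one_mul, Nat.sub_zero, Nat.choose_zero_right, Nat.cast_one, mul_one,
      Nat.add_sub_add_right, add_sub_cancel_right]
    exact sum_congr rfl fun k _ => by ring
  have hchoose (k : ℕ) : ((m : K) + 1) * m.choose k = (m + 1).choose (k + 1) * ((k : K) + 1) := by
    exact_mod_cast Nat.add_one_mul_choose_eq m k
  rw [hexpand, sum_div, mul_sum]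
  refine sum_congr rfl fun k _ => ?_
  have hk : (k : K) + 1 ≠ 0 := Nat.cast_add_one_ne_zero k
  have hm : (m : K) + 1 ≠ 0 := Nat.cast_add_one_ne_zero m
  field_simp
  linear_combination x ^ (k + 1) * y ^ (m - k) * hchoose k

theorem mul_sum_choose_mul_pow_mul_one_sub_pow_div_succ {K : Type*} [Field K] [CharZero K]
    (x y r : K) (m : ℕ) :
    x * ∑ k ∈ range (m + 1), (m.choose k : K) * x ^ k * y ^ (m - k) * ((1 - r ^ (k + 1)) / (k + 1))
      = ((x + y) ^ (m + 1) - (x * r + y) ^ (m + 1)) / (m + 1) := by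
  have hsplit : x * ∑ k ∈ range (m + 1),
        (m.choose k : K) * x ^ k * y ^ (m - k) * ((1 - r ^ (k + 1)) / (k + 1))
      = x * ∑ k ∈ range (m + 1), (m.choose k : K) * x ^ k * y ^ (m - k) / (k + 1)
        - x * r * ∑ k ∈ range (m + 1), (m.choose k : K) * (x * r) ^ k * y ^ (m - k) / (k + 1) := by
    rw [mul_sum, mul_sum, mul_sum, ← sum_sub_distrib]
    refine sum_congr rfl fun k _ => ?_
    rw [mul_pow]
    ring
  rw [hsplit, mul_sum_choose_mul_pow_div_succ, mul_sum_choose_mul_pow_div_succ]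
  ring

theorem stmt_0_general (q p : ℝ) (n : ℕ) (hp0 : 0 < p) :
    q * ∑ k ∈ Finset.range n, (((n - 1).choose k : ℝ) * p ^ k * (1 - p) ^ (n - 1 - k) *
        ∑ t ∈ Finset.range (k + 1), ((k.choose t : ℝ) * q ^ t * (1 - q) ^ (k - t) / (t + 1)))
      = (1 - (1 - q * p) ^ n) / (n * p) := by
  cases n with
  | zero => simp -- the right side is `0 / 0 = 0`
  | succ m =>
  have hinner (k : ℕ) : q * ∑ t ∈ range (k + 1), (k.choose t : ℝ) * q ^ t * (1 - q) ^ (k - t) / (t + 1)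
      = (1 - (1 - q) ^ (k + 1)) / (k + 1) := by
    simpa using mul_sum_choose_mul_pow_div_succ q (1 - q) k
  have houter := mul_sum_choose_mul_pow_mul_one_sub_pow_div_succ p (1 - p) (1 - q) m
  rw [add_sub_cancel, one_pow, show p * (1 - q) + (1 - p) = 1 - q * p by ring] at houter
  rw [Nat.add_sub_cancel, mul_sum]
  calc ∑ k ∈ range (m + 1), q * ((m.choose k : ℝ) * p ^ k * (1 - p) ^ (m - k) *
        ∑ t ∈ range (k + 1), (k.choose t : ℝ) * q ^ t * (1 - q) ^ (k - t) / (t + 1))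
      = (p * ∑ k ∈ range (m + 1), (m.choose k : ℝ) * p ^ k * (1 - p) ^ (m - k) *
          ((1 - (1 - q) ^ (k + 1)) / (k + 1))) / p := by
        rw [mul_div_cancel_left₀ _ hp0.ne']
        exact sum_congr rfl fun k _ => by rw [← hinner k]; ring
    _ = (1 - (1 - q * p) ^ (m + 1)) / ((m + 1 : ℕ) * p) := by
        rw [houter, div_div]
        push_cast
        rfl

/-- Key combinatorial identity relating an individual's prize-winning probability
to the aggregate probability the bug is found. -/
theorem stmt_0 (q p : ℝ) (n : ℕ) (hq0 : 0 < q) (hq1 : q ≤ 1)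
    (hp0 : 0 < p) (hp1 : p ≤ 1) (hn : 1 ≤ n) :
    q * ∑ k ∈ Finset.range n, (((n - 1).choose k : ℝ) * p ^ k * (1 - p) ^ (n - 1 - k) *
        ∑ t ∈ Finset.range (k + 1), ((k.choose t : ℝ) * q ^ t * (1 - q) ^ (k - t) / (t + 1)))
      = (1 - (1 - q * p) ^ n) / (n * p) :=
  stmt_0_general q p n hp0
end

section
/- The function Φ(p; q) = (1 - (1 - q p)^n)/(n p) is strictly decreasing in p on (0,1] for every fixed q ∈ (0,1] and n ≥ 2, and strictly increasing in q on (0,1] for every fixed p ∈ (0,1] and n ≥ 1. -/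
/-- Φ(p;q) = (1-(1-qp)^n)/(np) is strictly decreasing in p on (0,1] (for n ≥ 2)
and strictly increasing in q on (0,1] (for n ≥ 1). -/
theorem stmt_2 (n : ℕ) :
    (∀ q ∈ Set.Ioc (0 : ℝ) 1, 2 ≤ n →
      StrictAntiOn (fun p : ℝ => (1 - (1 - q * p) ^ n) / (n * p)) (Set.Ioc 0 1)) ∧
    (∀ p ∈ Set.Ioc (0 : ℝ) 1, 1 ≤ n →
      StrictMonoOn (fun q : ℝ => (1 - (1 - q * p) ^ n) / (n * p)) (Set.Ioc 0 1)) := by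
  constructor
  · intro q hq hn a ha b hb hab
    have hq0 : (0:ℝ) < q := hq.1
    have hq1 : q ≤ 1 := hq.2
    have hn0 : (0:ℝ) < n := by exact_mod_cast Nat.lt_of_lt_of_le Nat.zero_lt_two hn
    have key : ∀ x ∈ Set.Ioc (0:ℝ) 1,
        (1 - (1 - q * x) ^ n) / (n * x)
          = (q / n) * ∑ k ∈ Finset.range n, (1 - q * x) ^ k := by
      intro x hx
      have hx0 : (0:ℝ) < x := hx.1
      have hgeom : q * x * ∑ k ∈ Finset.range n, (1 - q * x) ^ k
          = 1 - (1 - q * x) ^ n := by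
        linear_combination -(geom_sum_mul (1 - q * x) n)
      rw [← hgeom]
      field_simp
    simp only
    rw [key a ha, key b hb]
    have hsum : ∑ k ∈ Finset.range n, (1 - q * b) ^ k
        < ∑ k ∈ Finset.range n, (1 - q * a) ^ k := by
      apply Finset.sum_lt_sum
      · intro k hk
        apply pow_le_pow_left₀
        · have : q * b ≤ 1 := mul_le_one₀ hq1 (le_of_lt hb.1) hb.2
          linarith
        · nlinarith [ha.1, hab]
      · refine ⟨1, Finset.mem_range.mpr (by omega), ?_⟩
        simp only [pow_one]
        nlinarith [ha.1, hab]
    have : (0:ℝ) < q / n := by positivity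
    nlinarith [hsum]
  · intro p hp hn a ha b hb hab
    have hp0 : (0:ℝ) < p := hp.1
    have hn0 : (0:ℝ) < n := by exact_mod_cast Nat.lt_of_lt_of_le Nat.zero_lt_one hn
    have hd : (0:ℝ) < n * p := by positivity
    simp only
    rw [div_lt_div_iff_of_pos_right hd]
    have h1 : (1 - b * p) ^ n < (1 - a * p) ^ n := by
      apply pow_lt_pow_left₀
      · nlinarith
      · have : b * p ≤ 1 := mul_le_one₀ hb.2 (le_of_lt hp0) hp.2
        linarith
      · omega
    linarith
end

section
/- Let c_low > 0, and let Ψ_∞(κ) = Σ_l v^l μ^l (1 - e^{-q^l κ})/c_low + v_a (1 - e^{-q_a κ})/c_low with all v^l, v_a ≥ 0 not all zero, μ^l ∈ (0,1], q^l ∈ (0,1], q_a ∈ (0,1]. Then Ψ_∞ has a unique fixed point κ* ∈ [0, ∞): Ψ_∞ is strictly increasing, strictly concave, bounded above by (Σ_l v^l + v_a)/c_low, satisfies Ψ_∞(0) = 0, and if Ψ_∞'(0) > 1 there exists a unique κ* > 0 with Ψ_∞(κ*) = κ*. -/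
open Real Set Finset Filter Topology

private lemma hda1 (a c x : ℝ) :
    HasDerivAt (fun κ => a * (1 - Real.exp (-(c * κ)))) (a * (c * Real.exp (-(c * x)))) x := by
  have h1 : HasDerivAt (fun κ : ℝ => -(c * κ)) (-c) x := by
    simpa using ((hasDerivAt_id x).const_mul c).fun_neg
  have h2 : HasDerivAt (fun κ : ℝ => Real.exp (-(c * κ))) (Real.exp (-(c * x)) * (-c)) x :=
    h1.exp
  have h3 := (h2.const_sub 1).const_mul a
  refine h3.congr_deriv ?_
  ring

private lemma hda2 (a c x : ℝ) :
    HasDerivAt (fun κ => a * (c * Real.exp (-(c * κ)))) (-(a * (c * c * Real.exp (-(c * x))))) x := by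
  have h1 : HasDerivAt (fun κ : ℝ => -(c * κ)) (-c) x := by
    simpa using ((hasDerivAt_id x).const_mul c).fun_neg
  have h2 : HasDerivAt (fun κ : ℝ => Real.exp (-(c * κ))) (Real.exp (-(c * x)) * (-c)) x :=
    h1.exp
  have h3 := h2.const_mul (a * c)
  have he : (fun κ : ℝ => a * (c * Real.exp (-(c * κ)))) = fun κ : ℝ => (a * c) * Real.exp (-(c * κ)) := by
    funext κ; ring
  rw [he]
  refine h3.congr_deriv ?_
  ring

private lemma key_pos {L : ℕ} (clow : ℝ) (hclow : 0 < clow) (v μ q : Fin L → ℝ) (va qa : ℝ)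
    (hv : ∀ l, 0 ≤ v l) (hva : 0 ≤ va) (hnz : 0 < ∑ l, v l + va)
    (hμ : ∀ l, 0 < μ l) (hq : ∀ l, 0 < q l) (hqa : 0 < qa)
    (e : Fin L → ℝ) (ea : ℝ) (he : ∀ l, 0 < e l) (hea : 0 < ea) :
    0 < ∑ l, v l * μ l * (q l * e l) / clow + va * (qa * ea) / clow := by
  have hnn : ∀ l ∈ Finset.univ, 0 ≤ v l * μ l * (q l * e l) / clow := fun l _ =>
    div_nonneg (mul_nonneg (mul_nonneg (hv l) (hμ l).le) (mul_pos (hq l) (he l)).le) hclow.le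
  rcases eq_or_lt_of_le hva with h | h
  · have hsum : 0 < ∑ l, v l := by
      rw [← h, add_zero] at hnz; exact hnz
    obtain ⟨l0, _, hl0⟩ := Finset.exists_lt_of_sum_lt (by simpa using hsum :
      ∑ l : Fin L, (0:ℝ) < ∑ l, v l)
    have hpos : 0 < ∑ l, v l * μ l * (q l * e l) / clow :=
      Finset.sum_pos' hnn ⟨l0, Finset.mem_univ _,
        div_pos (mul_pos (mul_pos hl0 (hμ l0)) (mul_pos (hq l0) (he l0))) hclow⟩
    have hz : va * (qa * ea) / clow = 0 := by rw [← h]; ring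
    linarith
  · have h1 : 0 ≤ ∑ l, v l * μ l * (q l * e l) / clow := Finset.sum_nonneg hnn
    have h2 : 0 < va * (qa * ea) / clow := div_pos (mul_pos h (mul_pos hqa hea)) hclow
    linarith

/-- Properties of the limiting expected-benefit function Ψ_∞ in the public program:
strictly increasing, strictly concave, bounded, Ψ_∞(0) = 0, and if Ψ_∞'(0) > 1 it
has a unique strictly positive fixed point. -/
theorem stmt_7 (clow : ℝ) (hclow : 0 < clow)
    (L : ℕ) (v μ q : Fin L → ℝ) (va qa : ℝ)
    (hv : ∀ l, 0 ≤ v l) (hva : 0 ≤ va)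
    (hnz : 0 < ∑ l, v l + va)
    (hμ : ∀ l, μ l ∈ Set.Ioc (0 : ℝ) 1)
    (hq : ∀ l, q l ∈ Set.Ioc (0 : ℝ) 1) (hqa : qa ∈ Set.Ioc (0 : ℝ) 1)
    (Ψ : ℝ → ℝ)
    (hΨ : ∀ κ, Ψ κ = ∑ l, v l * μ l * (1 - Real.exp (-(q l * κ))) / clow +
        va * (1 - Real.exp (-(qa * κ))) / clow) :
    StrictMonoOn Ψ (Set.Ici 0) ∧
    StrictConcaveOn ℝ (Set.Ici 0) Ψ ∧
    (∀ κ ∈ Set.Ici (0 : ℝ), Ψ κ ≤ (∑ l, v l + va) / clow) ∧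
    Ψ 0 = 0 ∧
    (1 < deriv Ψ 0 → ∃! κ, 0 < κ ∧ Ψ κ = κ) := by
  have hΨf : Ψ = fun κ => ∑ l, v l * μ l * (1 - Real.exp (-(q l * κ))) / clow +
      va * (1 - Real.exp (-(qa * κ))) / clow := funext hΨ
  subst hΨf
  set Ψ : ℝ → ℝ := fun κ => ∑ l, v l * μ l * (1 - Real.exp (-(q l * κ))) / clow +
      va * (1 - Real.exp (-(qa * κ))) / clow with hΨdef
  set D : ℝ → ℝ := fun x => ∑ l, v l * μ l * (q l * Real.exp (-(q l * x))) / clow +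
      va * (qa * Real.exp (-(qa * x))) / clow with hDdef
  have hD : ∀ x, HasDerivAt Ψ (D x) x := fun x =>
    (HasDerivAt.fun_sum fun l _ => (hda1 (v l * μ l) (q l) x).div_const clow).add
      ((hda1 va qa x).div_const clow)
  have hderiv : deriv Ψ = D := funext fun x => (hD x).deriv
  have hDpos : ∀ x, 0 < D x := fun x =>
    key_pos clow hclow v μ q va qa hv hva hnz (fun l => (hμ l).1) (fun l => (hq l).1) hqa.1
      (fun l => Real.exp (-(q l * x))) (Real.exp (-(qa * x)))
      (fun l => Real.exp_pos _) (Real.exp_pos _)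
  have hcont : Continuous Ψ := continuous_iff_continuousAt.mpr fun x => (hD x).continuousAt
  have hmono : StrictMonoOn Ψ (Set.Ici 0) := by
    apply strictMonoOn_of_deriv_pos (convex_Ici 0) hcont.continuousOn
    intro x _
    rw [hderiv]; exact hDpos x
  have hD' : ∀ x, HasDerivAt D
      ((∑ l, -(v l * μ l * (q l * q l * Real.exp (-(q l * x)))) / clow) +
        -(va * (qa * qa * Real.exp (-(qa * x)))) / clow) x := fun x =>
    (HasDerivAt.fun_sum fun l _ => (hda2 (v l * μ l) (q l) x).div_const clow).add
      ((hda2 va qa x).div_const clow)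
  have hD'neg : ∀ x, deriv D x < 0 := by
    intro x
    rw [(hD' x).deriv]
    have hp : 0 < ∑ l, v l * μ l * ((q l * q l) * Real.exp (-(q l * x))) / clow +
        va * ((qa * qa) * Real.exp (-(qa * x))) / clow :=
      key_pos clow hclow v μ (fun l => q l * q l) va (qa * qa) hv hva hnz
        (fun l => (hμ l).1) (fun l => mul_pos (hq l).1 (hq l).1) (mul_pos hqa.1 hqa.1)
        (fun l => Real.exp (-(q l * x))) (Real.exp (-(qa * x)))
        (fun l => Real.exp_pos _) (Real.exp_pos _)
    have heq : (∑ l, -(v l * μ l * (q l * q l * Real.exp (-(q l * x)))) / clow) +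
        -(va * (qa * qa * Real.exp (-(qa * x)))) / clow =
        -(∑ l, v l * μ l * ((q l * q l) * Real.exp (-(q l * x))) / clow +
          va * ((qa * qa) * Real.exp (-(qa * x))) / clow) := by
      rw [neg_add, ← Finset.sum_neg_distrib]
      congr 1
      · exact Finset.sum_congr rfl fun l _ => by ring
      · ring
    rw [heq]
    linarith
  have hconc : StrictConcaveOn ℝ (Set.Ici 0) Ψ := by
    apply strictConcaveOn_of_deriv2_neg (convex_Ici 0) hcont.continuousOn
    intro x _
    show deriv (deriv Ψ) x < 0
    rw [hderiv]
    exact hD'neg x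
  have hΨ0 : Ψ 0 = 0 := by simp [hΨdef]
  have hbound : ∀ κ ∈ Set.Ici (0:ℝ), Ψ κ ≤ (∑ l, v l + va) / clow := by
    intro κ hκ
    have hκ0 : (0:ℝ) ≤ κ := hκ
    have hterm : ∀ l ∈ Finset.univ, v l * μ l * (1 - Real.exp (-(q l * κ))) / clow ≤ v l / clow := by
      intro l _
      refine div_le_div_of_nonneg_right ?_ hclow.le
      have h1 : Real.exp (-(q l * κ)) ≤ 1 := Real.exp_le_one_iff.mpr (by
        have := mul_nonneg (hq l).1.le hκ0; linarith)
      have h2 : 0 < Real.exp (-(q l * κ)) := Real.exp_pos _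
      have h4 : v l * μ l * (1 - Real.exp (-(q l * κ))) ≤ v l * μ l :=
        mul_le_of_le_one_right (mul_nonneg (hv l) (hμ l).1.le) (by linarith)
      have h5 : v l * μ l ≤ v l := mul_le_of_le_one_right (hv l) (hμ l).2
      linarith
    have hterma : va * (1 - Real.exp (-(qa * κ))) / clow ≤ va / clow := by
      refine div_le_div_of_nonneg_right ?_ hclow.le
      have h1 : Real.exp (-(qa * κ)) ≤ 1 := Real.exp_le_one_iff.mpr (by
        have := mul_nonneg hqa.1.le hκ0; linarith)
      have h2 : 0 < Real.exp (-(qa * κ)) := Real.exp_pos _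
      have h4 : va * (1 - Real.exp (-(qa * κ))) ≤ va :=
        mul_le_of_le_one_right hva (by linarith)
      linarith
    calc Ψ κ ≤ ∑ l, v l / clow + va / clow :=
          add_le_add (Finset.sum_le_sum hterm) hterma
      _ = (∑ l, v l + va) / clow := by rw [← Finset.sum_div, ← add_div]
  refine ⟨hmono, hconc, hbound, hΨ0, ?_⟩
  intro hd1
  rw [hderiv] at hd1
  set F : ℝ → ℝ := fun κ => Ψ κ - κ with hFdef
  have hF0 : F 0 = 0 := by simp [hFdef, hΨ0]
  have hFd : HasDerivAt F (D 0 - 1) 0 := (hD 0).sub (hasDerivAt_id 0)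
  -- find small x with F x > 0
  have hslope : Tendsto (slope F 0) (𝓝[>] (0:ℝ)) (𝓝 (D 0 - 1)) :=
    (hasDerivAt_iff_tendsto_slope.mp hFd).mono_left
      (nhdsWithin_mono 0 (fun y hy => ne_of_gt hy))
  have hev : ∀ᶠ y in 𝓝[>] (0:ℝ), 0 < slope F 0 y :=
    hslope.eventually (eventually_gt_nhds (by linarith))
  obtain ⟨x, hx1, hx2⟩ := (hev.and self_mem_nhdsWithin).exists
  have hx0 : (0:ℝ) < x := hx2
  have hFx : 0 < F x := by
    have h := hx1
    rw [slope_def_field, hF0, sub_zero, sub_zero] at h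
    calc (0:ℝ) < (F x / x) * x := mul_pos h hx0
      _ = F x := div_mul_cancel₀ _ (ne_of_gt hx0)
  -- big K with F K < 0
  set M : ℝ := (∑ l, v l + va) / clow with hMdef
  set K : ℝ := max x M + 1 with hKdef
  have hxK : x < K := lt_of_le_of_lt (le_max_left x M) (lt_add_one _)
  have hK0 : (0:ℝ) ≤ K := (hx0.trans hxK).le
  have hMK : M < K := lt_of_le_of_lt (le_max_right x M) (lt_add_one _)
  have hFK : F K < 0 := by
    have h := hbound K hK0
    simp only [hFdef]
    linarith
  -- IVT
  have hFcont : ContinuousOn F (Set.Icc x K) := (hcont.sub continuous_id).continuousOn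
  have hmem : (0:ℝ) ∈ Set.Icc (F K) (F x) := ⟨hFK.le, hFx.le⟩
  obtain ⟨κ, hκmem, hκeq⟩ := intermediate_value_Icc' hxK.le hFcont hmem
  have hκpos : 0 < κ := lt_of_lt_of_le hx0 hκmem.1
  have hκfix : Ψ κ = κ := by
    have : Ψ κ - κ = 0 := hκeq
    linarith
  -- uniqueness via strict concavity
  have key : ∀ a b : ℝ, 0 < a → a < b → Ψ b = b → a < Ψ a := by
    intro a b ha hab hb
    have hb0 : 0 < b := ha.trans hab
    have hne : (0:ℝ) ≠ b := hb0.ne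
    have hs : 0 < 1 - a / b := by
      rw [sub_pos, div_lt_one hb0]; exact hab
    have ht : 0 < a / b := div_pos ha hb0
    have h := hconc.2 (Set.mem_Ici.mpr le_rfl) (Set.mem_Ici.mpr hb0.le) hne hs ht (by ring)
    have e1 : (1 - a / b) • (0:ℝ) + (a / b) • b = a := by
      rw [smul_eq_mul, smul_eq_mul, mul_zero, zero_add, div_mul_cancel₀ a hb0.ne']
    have e2 : (1 - a / b) • Ψ 0 + (a / b) • Ψ b = a := by
      rw [hΨ0, hb, smul_eq_mul, smul_eq_mul, mul_zero, zero_add, div_mul_cancel₀ a hb0.ne']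
    rw [e1, e2] at h
    exact h
  refine ⟨κ, ⟨hκpos, hκfix⟩, ?_⟩
  rintro y ⟨hy0, hyfix⟩
  rcases lt_trichotomy y κ with h | h | h
  · have := key y κ hy0 h hκfix
    rw [hyfix] at this
    exact absurd this (lt_irrefl y)
  · exact h
  · have := key κ y hκpos h hyfix
    rw [hκfix] at this
    exact absurd this (lt_irrefl κ)
end

section
/- For v̄ > 0 and c_low > 0, the map κ ↦ v̄(1 - e^{-κ})/c_low has a unique strictly positive fixed point κ_a(v̄) whenever v̄ > c_low, and κ_a(v̄) is strictly increasing in v̄. -/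
/-!
Dividing the fixed-point equation `v̄ (1 - e^{-κ}) / c_low = κ` by `1 - e^{-κ}` turns it into
`κ / (1 - e^{-κ}) = v̄ / c_low`. The left-hand side is strictly increasing on `(0, ∞)`, since
its derivative has numerator `e^{-κ} (e^κ - 1 - κ) > 0`; it exceeds `κ` and stays below `e^κ`.
Hence for `v̄ / c_low > 1` the intermediate value theorem on `[log (v̄ / c_low), v̄ / c_low]`
gives a fixed point, injectivity makes it unique, and strict monotonicity makes it increasing
in `v̄`.
-/

open Real Set

namespace BugBounty

/-- The budget-to-cost ratio `v̄ / c_low` at which `κ` is a fixed point. -/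
noncomputable def budgetRatio (κ : ℝ) : ℝ := κ / (1 - exp (-κ))

lemma one_sub_exp_neg_pos {x : ℝ} (hx : 0 < x) : 0 < 1 - exp (-x) :=
  sub_pos.2 (exp_lt_one_iff.2 (neg_neg_of_pos hx))

lemma continuousOn_budgetRatio : ContinuousOn budgetRatio (Ioi 0) :=
  continuousOn_id.div (by fun_prop) fun _ hx => (one_sub_exp_neg_pos hx).ne'

lemma lt_budgetRatio {x : ℝ} (hx : 0 < x) : x < budgetRatio x := by
  have hd := one_sub_exp_neg_pos hx
  rw [budgetRatio, lt_div_iff₀ hd]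
  nlinarith [exp_pos (-x)]

lemma budgetRatio_lt_exp {x : ℝ} (hx : 0 < x) : budgetRatio x < exp x := by
  rw [budgetRatio, div_lt_iff₀ (one_sub_exp_neg_pos hx), mul_sub, mul_one, ← exp_add,
    add_neg_cancel, exp_zero]
  linarith [add_one_lt_exp hx.ne']

lemma hasDerivAt_budgetRatio {x : ℝ} (hx : 0 < x) :
    HasDerivAt budgetRatio (exp (-x) * (exp x - 1 - x) / (1 - exp (-x)) ^ 2) x := by
  have hden : HasDerivAt (fun y => 1 - exp (-y)) (exp (-x)) x := by
    simpa using ((hasDerivAt_neg x).exp).const_sub 1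
  refine ((hasDerivAt_id x).div hden (one_sub_exp_neg_pos hx).ne').congr_deriv ?_
  have hinv : exp (-x) * exp x = 1 := by rw [← exp_add, neg_add_cancel, exp_zero]
  rw [id]
  congr 1
  linear_combination -hinv

lemma budgetRatio_strictMonoOn : StrictMonoOn budgetRatio (Ioi 0) := by
  refine strictMonoOn_of_deriv_pos (convex_Ioi 0) continuousOn_budgetRatio fun x hx => ?_
  rw [interior_Ioi] at hx
  rw [(hasDerivAt_budgetRatio hx).deriv]
  have : 0 < exp x - 1 - x := by linarith [add_one_lt_exp hx.ne']
  have := one_sub_exp_neg_pos hx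
  positivity

lemma exists_budgetRatio_eq {a : ℝ} (ha : 1 < a) : ∃ κ, 0 < κ ∧ budgetRatio κ = a := by
  have hlog : 0 < log a := log_pos ha
  have hlog_le : log a ≤ a := (log_le_sub_one_of_pos (by linarith)).trans (by linarith)
  have hIcc : Icc (log a) a ⊆ Ioi 0 := fun _ hx => hlog.trans_le hx.1
  have hlow : budgetRatio (log a) < a := by
    simpa [exp_log (zero_lt_one.trans ha)] using budgetRatio_lt_exp hlog
  have hhigh : a < budgetRatio a := lt_budgetRatio (zero_lt_one.trans ha)
  obtain ⟨κ, hκ, hκa⟩ := intermediate_value_Icc hlog_le (continuousOn_budgetRatio.mono hIcc)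
    ⟨hlow.le, hhigh.le⟩
  exact ⟨κ, hIcc hκ, hκa⟩

lemma fixedPoint_iff_budgetRatio_eq {c v κ : ℝ} (hc : 0 < c) (hκ : 0 < κ) :
    v * (1 - exp (-κ)) / c = κ ↔ budgetRatio κ = v / c := by
  have hd := one_sub_exp_neg_pos hκ
  rw [budgetRatio, div_eq_iff hc.ne', div_eq_div_iff hd.ne' hc.ne']
  constructor <;> intro h <;> linarith

end BugBounty

open BugBounty in
/-- The map κ ↦ v̄(1 - e^{-κ})/c_low has a unique strictly positive fixed point
κ_a(v̄) whenever v̄ > c_low, and this fixed point is strictly increasing in v̄. -/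
theorem stmt_10 (clow : ℝ) (hclow : 0 < clow) :
    (∀ v : ℝ, clow < v → ∃! κ, 0 < κ ∧ v * (1 - Real.exp (-κ)) / clow = κ) ∧
    (∀ v₁ v₂ : ℝ, clow < v₁ → v₁ < v₂ →
      ∀ κ₁ κ₂ : ℝ,
        (0 < κ₁ ∧ v₁ * (1 - Real.exp (-κ₁)) / clow = κ₁) →
        (0 < κ₂ ∧ v₂ * (1 - Real.exp (-κ₂)) / clow = κ₂) →
        κ₁ < κ₂) := by
  constructor
  · intro v hv
    obtain ⟨κ, hκ, hratio⟩ := exists_budgetRatio_eq ((one_lt_div hclow).2 hv)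
    refine ⟨κ, ⟨hκ, (fixedPoint_iff_budgetRatio_eq hclow hκ).2 hratio⟩, ?_⟩
    rintro κ' ⟨hκ', hfix'⟩
    refine budgetRatio_strictMonoOn.injOn hκ' hκ ?_
    rw [(fixedPoint_iff_budgetRatio_eq hclow hκ').1 hfix', hratio]
  · rintro v₁ v₂ - hv₁₂ κ₁ κ₂ ⟨hκ₁, hfix₁⟩ ⟨hκ₂, hfix₂⟩
    rw [← budgetRatio_strictMonoOn.lt_iff_lt hκ₁ hκ₂,
      (fixedPoint_iff_budgetRatio_eq hclow hκ₁).1 hfix₁,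
      (fixedPoint_iff_budgetRatio_eq hclow hκ₂).1 hfix₂]
    exact div_lt_div_of_pos_right hv₁₂ hclow
end

section
/- Let g(ĉ) = v̄ · (1 - (1 - F(ĉ))^n)/(n F(ĉ)) for ĉ with F(ĉ) > 0 (extended by g(ĉ) = v̄ when F(ĉ) = 0), where F is a continuous strictly increasing CDF on [c_low, c_high] with c_low ≥ 0 and v̄ > 0, n ≥ 1. Then g is continuous and non-increasing, and if g(c_high) < c_high and g(c_low) > c_low, then g has a unique fixed point c_a(v̄) in (c_low, c_high); moreover c_a(v̄) is non-decreasing in v̄. -/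
/-- The highest achievable threshold map g(ĉ) = v̄ Φ(F(ĉ);1) is continuous and
non-increasing; under the boundary conditions it has a unique interior fixed point
c_a(v̄), which is non-decreasing in the budget v̄. -/
theorem stmt_11 (clow chigh : ℝ) (h0 : 0 ≤ clow) (hlt : clow < chigh)
    (F : ℝ → ℝ) (hFcont : ContinuousOn F (Set.Icc clow chigh))
    (hFmono : StrictMonoOn F (Set.Icc clow chigh))
    (hFrange : ∀ c ∈ Set.Icc clow chigh, F c ∈ Set.Icc (0 : ℝ) 1)
    (n : ℕ) (hn : 1 ≤ n)
    (G : ℝ → ℝ → ℝ)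
    (hG : ∀ v c, G v c = if F c = 0 then v else v * (1 - (1 - F c) ^ n) / (n * F c)) :
    ∀ v : ℝ, 0 < v →
      ContinuousOn (G v) (Set.Icc clow chigh) ∧
      AntitoneOn (G v) (Set.Icc clow chigh) ∧
      (G v chigh < chigh → clow < G v clow →
        ∃! c, c ∈ Set.Ioo clow chigh ∧ G v c = c) ∧
      (∀ v' : ℝ, v ≤ v' → ∀ c c' : ℝ,
        (c ∈ Set.Ioo clow chigh ∧ G v c = c) →
        (c' ∈ Set.Ioo clow chigh ∧ G v' c' = c') → c ≤ c') := by
  intro v hv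
  have hn0 : (0 : ℝ) < (n : ℝ) := by
    have : (0 : ℕ) < n := hn
    exact_mod_cast this
  set S : ℝ → ℝ := fun x => ∑ k ∈ Finset.range n, (1 - x) ^ k with hSdef
  -- the key polynomial identity
  have hkey : ∀ x : ℝ, 1 - (1 - x) ^ n = x * S x := by
    intro x
    have := geom_sum_mul (1 - x) n
    simp only [hSdef]
    nlinarith [this]
  have hG' : ∀ w c : ℝ, G w c = w * S (F c) / n := by
    intro w c
    rw [hG]
    by_cases h : F c = 0
    · simp only [h, if_true, hSdef, sub_zero, one_pow, Finset.sum_const,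
        Finset.card_range, nsmul_eq_mul, mul_one]
      field_simp
    · rw [if_neg h, hkey (F c)]
      field_simp
  -- nonnegativity of S on range of F
  have hSnn : ∀ c ∈ Set.Icc clow chigh, 0 ≤ S (F c) := by
    intro c hc
    have hr := hFrange c hc
    apply Finset.sum_nonneg
    intro k _
    have : 0 ≤ 1 - F c := by linarith [hr.2]
    positivity
  -- continuity
  have hpoly : ∀ w : ℝ, Continuous fun x : ℝ => w * S x / n := by
    intro w
    apply Continuous.div_const
    apply Continuous.mul continuous_const
    apply continuous_finset_sum
    intro k _
    exact (continuous_const.sub continuous_id).pow k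
  have hcont : ContinuousOn (G v) (Set.Icc clow chigh) := by
    have h1 : ContinuousOn (fun c => v * S (F c) / n) (Set.Icc clow chigh) :=
      (hpoly v).comp_continuousOn hFcont
    exact h1.congr fun c _ => hG' v c
  -- S comparison
  have hSmono : ∀ c ∈ Set.Icc clow chigh, ∀ c' ∈ Set.Icc clow chigh, c ≤ c' →
      S (F c') ≤ S (F c) := by
    intro c hc c' hc' hle
    have hFle : F c ≤ F c' := by
      rcases eq_or_lt_of_le hle with h | h
      · subst h; exact le_rfl
      · exact (hFmono hc hc' h).le
    simp only [hSdef]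
    apply Finset.sum_le_sum
    intro k _
    have h1 : 0 ≤ 1 - F c' := by linarith [(hFrange c' hc').2]
    have h2 : 1 - F c' ≤ 1 - F c := by linarith
    exact pow_le_pow_left₀ h1 h2 k
  have hmono' : ∀ w : ℝ, 0 < w → AntitoneOn (G w) (Set.Icc clow chigh) := by
    intro w hw c hc c' hc' hle
    rw [hG', hG']
    have := hSmono c hc c' hc' hle
    gcongr
  have hanti : AntitoneOn (G v) (Set.Icc clow chigh) := hmono' v hv
  refine ⟨hcont, hanti, ?_, ?_⟩
  · -- unique fixed point
    intro hhigh hlow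
    set h : ℝ → ℝ := fun c => G v c - c with hhdef
    have hhc : ContinuousOn h (Set.Icc clow chigh) := hcont.sub continuousOn_id
    have hsa : StrictAntiOn h (Set.Icc clow chigh) := by
      intro x hx y hy hxy
      have := hanti hx hy hxy.le
      simp only [hhdef]
      linarith
    have h0' : (0 : ℝ) ∈ Set.Ioo (h chigh) (h clow) := by
      constructor
      · simp only [hhdef]; linarith
      · simp only [hhdef]; linarith
    obtain ⟨c, hcmem, hc0⟩ := intermediate_value_Ioo' hlt.le hhc h0'
    have hcfix : G v c = c := by
      have : G v c - c = 0 := hc0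
      linarith
    refine ⟨c, ⟨hcmem, hcfix⟩, ?_⟩
    rintro y ⟨hy, hyfix⟩
    apply hsa.injOn (Set.Ioo_subset_Icc_self hy) (Set.Ioo_subset_Icc_self hcmem)
    simp only [hhdef]
    rw [hyfix, hcfix]
    simp
  · -- monotone in v
    rintro v' hvv' c c' ⟨hc, hcf⟩ ⟨hc', hcf'⟩
    by_contra hcon
    push_neg at hcon
    have h1 : G v c ≤ G v c' :=
      hanti (Set.Ioo_subset_Icc_self hc') (Set.Ioo_subset_Icc_self hc) hcon.le
    have h2 : G v c' ≤ G v' c' := by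
      rw [hG', hG']
      have := hSnn c' (Set.Ioo_subset_Icc_self hc')
      gcongr
    rw [hcf] at h1
    rw [hcf'] at h2
    linarith
end

section
/- Let F be a continuous, strictly increasing CDF with density f > 0 such that F/f is non-decreasing, and define Ω(ĉ) = Σ_l w^l μ^l q^l (1 - q^l F(ĉ))^{n-1} - F(ĉ)/f(ĉ) with w^l ≥ 0, μ^l ∈ (0,1], q^l ∈ (0,1], n ≥ 1. Then Ω is non-increasing, and ĉ ↦ Ω(ĉ) - ĉ is strictly decreasing; hence Ω has at most one fixed point, and if Ω(c_low) > c_low and Ω(c_high) < c_high, exactly one fixed point c̃ ∈ (c_low, c_high) exists. -/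
/-!
Raising `c` lowers every term `(1 - q F(c))^(n-1)` and raises the subtracted term `F / f`,
so `Ω` is antitone. Then `Ω - id` is strictly decreasing, which
allows at most one fixed point, and continuity of `Ω` with the intermediate value theorem applied
to `Ω - id` yields one in `(c_low, c_high)`.
-/

open Set

section Monotonicity

variable {α β : Type*} [Preorder β] {s : Set β}

theorem AntitoneOn.finset_sum [AddCommMonoid α] [Preorder α] [AddLeftMono α] {ι : Type*}
    (t : Finset ι) {f : ι → β → α} (hf : ∀ i ∈ t, AntitoneOn (f i) s) :
    AntitoneOn (fun x => ∑ i ∈ t, f i x) s :=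
  fun _ ha _ hb hab => Finset.sum_le_sum fun i hi => hf i hi ha hb hab

theorem AntitoneOn.sub_monotoneOn [AddCommGroup α] [PartialOrder α] [IsOrderedAddMonoid α]
    {f g : β → α} (hf : AntitoneOn f s) (hg : MonotoneOn g s) :
    AntitoneOn (fun x => f x - g x) s :=
  fun _ ha _ hb hab => sub_le_sub (hf ha hb hab) (hg ha hb hab)

end Monotonicity

section FixedPoints

variable {α : Type*} [AddCommGroup α] [LinearOrder α] [IsOrderedAddMonoid α] {s : Set α}
  {g : α → α}

theorem AntitoneOn.strictAntiOn_sub_id (hg : AntitoneOn g s) :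
    StrictAntiOn (fun x => g x - x) s :=
  fun _ ha b hb hab => (sub_le_sub_right (hg ha hb hab.le) b).trans_lt (sub_lt_sub_left hab _)

theorem AntitoneOn.eq_of_isFixedPt (hg : AntitoneOn g s) {x y : α} (hx : x ∈ s) (hy : y ∈ s)
    (hgx : Function.IsFixedPt g x) (hgy : Function.IsFixedPt g y) : x = y :=
  hg.strictAntiOn_sub_id.injOn hx hy (by simp only [hgx.eq, hgy.eq, sub_self])

end FixedPoints

theorem AntitoneOn.existsUnique_isFixedPt_Ioo {a b : ℝ} {g : ℝ → ℝ} (hab : a ≤ b)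
    (hg : AntitoneOn g (Icc a b)) (hcont : ContinuousOn g (Icc a b)) (ha : a < g a)
    (hb : g b < b) : ∃! c, c ∈ Ioo a b ∧ g c = c := by
  have hzero : (0 : ℝ) ∈ Ioo (g b - b) (g a - a) := ⟨by linarith, by linarith⟩
  obtain ⟨c, hc, hgc⟩ := intermediate_value_Ioo' hab (hcont.sub continuousOn_id) hzero
  have hfix : g c = c := sub_eq_zero.mp hgc
  refine ⟨c, ⟨hc, hfix⟩, fun c' ⟨hc', hfix'⟩ => ?_⟩
  exact hg.eq_of_isFixedPt (Ioo_subset_Icc_self hc') (Ioo_subset_Icc_self hc) hfix' hfix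

theorem antitoneOn_const_mul_pow_one_sub_mul {s : Set ℝ} {F : ℝ → ℝ} (hF : MonotoneOn F s)
    (hF_le_one : ∀ c ∈ s, F c ≤ 1) {a q : ℝ} (ha : 0 ≤ a) (hq₀ : 0 ≤ q) (hq₁ : q ≤ 1) (m : ℕ) :
    AntitoneOn (fun c => a * (1 - q * F c) ^ m) s := by
  intro x hx y hy hxy
  have hqF : q * F x ≤ q * F y := mul_le_mul_of_nonneg_left (hF hx hy hxy) hq₀
  have hqF_le_one : q * F y ≤ 1 :=
    (mul_le_mul_of_nonneg_left (hF_le_one y hy) hq₀).trans (by linarith)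
  exact mul_le_mul_of_nonneg_left (pow_le_pow_left₀ (by linarith) (by linarith) m) ha

theorem stmt_12_general (clow chigh : ℝ) (hlt : clow < chigh)
    (F f : ℝ → ℝ)
    (hFcont : ContinuousOn F (Set.Icc clow chigh))
    (hFmono : StrictMonoOn F (Set.Icc clow chigh))
    (hFrange : ∀ c ∈ Set.Icc clow chigh, F c ∈ Set.Icc (0 : ℝ) 1)
    (hf : ∀ c ∈ Set.Icc clow chigh, 0 < f c)
    (hfcont : ContinuousOn f (Set.Icc clow chigh))
    (hFf : MonotoneOn (fun c => F c / f c) (Set.Icc clow chigh))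
    (n : ℕ)
    (L : ℕ) (w μ q : Fin L → ℝ)
    (hw : ∀ l, 0 ≤ w l)
    (hμ : ∀ l, μ l ∈ Set.Ioc (0 : ℝ) 1)
    (hq : ∀ l, q l ∈ Set.Ioc (0 : ℝ) 1)
    (Ω : ℝ → ℝ)
    (hΩ : ∀ c, Ω c = ∑ l, w l * μ l * q l * (1 - q l * F c) ^ (n - 1) - F c / f c) :
    AntitoneOn Ω (Set.Icc clow chigh) ∧
    StrictAntiOn (fun c => Ω c - c) (Set.Icc clow chigh) ∧
    (∀ c₁ ∈ Set.Icc clow chigh, ∀ c₂ ∈ Set.Icc clow chigh,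
      Ω c₁ = c₁ → Ω c₂ = c₂ → c₁ = c₂) ∧
    (clow < Ω clow → Ω chigh < chigh →
      ∃! c, c ∈ Set.Ioo clow chigh ∧ Ω c = c) := by
  have hΩ_eq : Ω = fun c => ∑ l, w l * μ l * q l * (1 - q l * F c) ^ (n - 1) - F c / f c :=
    funext hΩ
  have hanti : AntitoneOn Ω (Icc clow chigh) := by
    rw [hΩ_eq]
    refine AntitoneOn.sub_monotoneOn (AntitoneOn.finset_sum _ fun l _ => ?_) hFf
    exact antitoneOn_const_mul_pow_one_sub_mul hFmono.monotoneOn (fun c hc => (hFrange c hc).2)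
      (mul_nonneg (mul_nonneg (hw l) (hμ l).1.le) (hq l).1.le) (hq l).1.le (hq l).2 _
  have hcont : ContinuousOn Ω (Icc clow chigh) := by
    rw [hΩ_eq]
    exact ContinuousOn.sub (by fun_prop) (hFcont.div hfcont fun c hc => (hf c hc).ne')
  exact ⟨hanti, hanti.strictAntiOn_sub_id, fun c₁ h₁ c₂ h₂ => hanti.eq_of_isFixedPt h₁ h₂,
    hanti.existsUnique_isFixedPt_Ioo hlt.le hcont⟩

/-- The first-order-condition function Ω of the private program is non-increasing,
Ω - id is strictly decreasing, so Ω has at most one fixed point, and under the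
boundary conditions exactly one fixed point c̃ exists in the interior. -/
theorem stmt_12 (clow chigh : ℝ) (hlt : clow < chigh)
    (F f : ℝ → ℝ)
    (hFcont : ContinuousOn F (Set.Icc clow chigh))
    (hFmono : StrictMonoOn F (Set.Icc clow chigh))
    (hFrange : ∀ c ∈ Set.Icc clow chigh, F c ∈ Set.Icc (0 : ℝ) 1)
    (hf : ∀ c ∈ Set.Icc clow chigh, 0 < f c)
    (hfcont : ContinuousOn f (Set.Icc clow chigh))
    (hderiv : ∀ c ∈ Set.Icc clow chigh, HasDerivAt F (f c) c)
    (hFf : MonotoneOn (fun c => F c / f c) (Set.Icc clow chigh))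
    (n : ℕ) (hn : 1 ≤ n)
    (L : ℕ) (w μ q : Fin L → ℝ)
    (hw : ∀ l, 0 ≤ w l)
    (hμ : ∀ l, μ l ∈ Set.Ioc (0 : ℝ) 1)
    (hq : ∀ l, q l ∈ Set.Ioc (0 : ℝ) 1)
    (Ω : ℝ → ℝ)
    (hΩ : ∀ c, Ω c = ∑ l, w l * μ l * q l * (1 - q l * F c) ^ (n - 1) - F c / f c) :
    AntitoneOn Ω (Set.Icc clow chigh) ∧
    StrictAntiOn (fun c => Ω c - c) (Set.Icc clow chigh) ∧
    (∀ c₁ ∈ Set.Icc clow chigh, ∀ c₂ ∈ Set.Icc clow chigh,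
      Ω c₁ = c₁ → Ω c₂ = c₂ → c₁ = c₂) ∧
    (clow < Ω clow → Ω chigh < chigh →
      ∃! c, c ∈ Set.Ioo clow chigh ∧ Ω c = c) :=
  stmt_12_general clow chigh hlt F f hFcont hFmono hFrange hf hfcont hFf n L w μ q hw hμ hq Ω hΩ
end

section
/- Let W(ĉ) = Σ_l w^l μ^l (1 - (1 - q^l F(ĉ))^n) - n F(ĉ) ĉ where F is a continuously differentiable strictly increasing CDF with density f > 0. Then W'(ĉ) = n f(ĉ) (Ω(ĉ) - ĉ), where Ω(ĉ) = Σ_l w^l μ^l q^l (1 - q^l F(ĉ))^{n-1} - F(ĉ)/f(ĉ). Consequently, if c̃ is the unique fixed point of Ω and Ω - id is strictly decreasing, then W is strictly increasing on [c_low, c̃] and strictly decreasing on [c̃, c_high], so W is maximized over any interval [0, c_a] at min{c̃, c_a}. -/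
/-- W'(ĉ) = n f(ĉ) (Ω(ĉ) - ĉ); hence W is single-peaked at the unique fixed point
c̃ of Ω and is maximized over [0, c_a] at min{c̃, c_a}. -/
theorem stmt_13 (chigh : ℝ)
    (F f : ℝ → ℝ)
    (hf : ∀ c, 0 < f c)
    (hfcont : Continuous f)
    (hFmono : StrictMono F)
    (hderiv : ∀ c, HasDerivAt F (f c) c)
    (n : ℕ) (hn : 1 ≤ n)
    (L : ℕ) (w μ q : Fin L → ℝ)
    (hw : ∀ l, 0 ≤ w l)
    (hμ : ∀ l, μ l ∈ Set.Ioc (0 : ℝ) 1)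
    (hq : ∀ l, q l ∈ Set.Ioc (0 : ℝ) 1)
    (W Ω : ℝ → ℝ)
    (hW : ∀ c, W c = ∑ l, w l * μ l * (1 - (1 - q l * F c) ^ n) - n * F c * c)
    (hΩ : ∀ c, Ω c = ∑ l, w l * μ l * q l * (1 - q l * F c) ^ (n - 1) - F c / f c)
    (ct : ℝ) (hct0 : 0 ≤ ct) (hcth : ct ≤ chigh)
    (hfix : Ω ct = ct)
    (hsd : StrictAntiOn (fun c => Ω c - c) (Set.Icc 0 chigh)) :
    (∀ c, HasDerivAt W ((n : ℝ) * f c * (Ω c - c)) c) ∧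
    StrictMonoOn W (Set.Icc 0 ct) ∧
    StrictAntiOn W (Set.Icc ct chigh) ∧
    (∀ ca : ℝ, 0 ≤ ca → ca ≤ chigh → IsMaxOn W (Set.Icc 0 ca) (min ct ca)) := by
  have hne : ∀ c, f c ≠ 0 := fun c => (hf c).ne'
  have hnpos : (0:ℝ) < (n:ℝ) := by exact_mod_cast hn
  -- derivative
  have hW' : ∀ c, HasDerivAt W ((n : ℝ) * f c * (Ω c - c)) c := by
    intro c
    have hsum : HasDerivAt (fun x => ∑ l, w l * μ l * (1 - (1 - q l * F x) ^ n))
        (∑ l, w l * μ l * ((n : ℝ) * (1 - q l * F c) ^ (n - 1) * (q l * f c))) c := by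
      apply HasDerivAt.fun_sum
      intro l _
      have h1 : HasDerivAt (fun x => 1 - q l * F x) (-(q l * f c)) c :=
        ((hderiv c).const_mul (q l)).const_sub 1
      have h2 := (h1.pow n).const_sub 1
      have h3 : HasDerivAt (fun x => 1 - (1 - q l * F x) ^ n)
          ((n : ℝ) * (1 - q l * F c) ^ (n - 1) * (q l * f c)) c := by
        convert h2 using 1; rfl; rfl; rfl; ring
      exact h3.const_mul _
    have hmul : HasDerivAt (fun x => (n : ℝ) * F x * x)
        ((n : ℝ) * f c * c + (n : ℝ) * F c * 1) c :=
      ((hderiv c).const_mul (n : ℝ)).mul (hasDerivAt_id c)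
    have hWd := hsum.sub hmul
    have hEq : W = fun x => (∑ l, w l * μ l * (1 - (1 - q l * F x) ^ n)) - (n : ℝ) * F x * x := by
      funext x; rw [hW x]
    rw [hEq]
    convert hWd using 1; rfl; rfl; rfl
    have hS : (∑ l, w l * μ l * ((n : ℝ) * (1 - q l * F c) ^ (n - 1) * (q l * f c)))
        = (n : ℝ) * f c * ∑ l, w l * μ l * q l * (1 - q l * F c) ^ (n - 1) := by
      rw [Finset.mul_sum]
      exact Finset.sum_congr rfl (fun l _ => by ring)
    rw [hS, hΩ c]
    field_simp [hne c]
    simp only [mul_comm (F c)]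
    ring
  refine ⟨hW', ?_, ?_, ?_⟩
  · -- StrictMonoOn on [0, ct]
    have hmono : StrictMonoOn W (Set.Icc 0 ct) := by
      apply strictMonoOn_of_deriv_pos (convex_Icc 0 ct)
      · exact fun x _ => ((hW' x).differentiableAt.continuousAt).continuousWithinAt
      · intro x hx
        rw [interior_Icc] at hx
        rw [(hW' x).deriv]
        have hxm : x ∈ Set.Icc (0:ℝ) chigh := ⟨le_of_lt hx.1, le_trans (le_of_lt hx.2) hcth⟩
        have hctm : ct ∈ Set.Icc (0:ℝ) chigh := ⟨hct0, hcth⟩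
        have h0 : Ω ct - ct = 0 := by rw [hfix]; ring
        have hpos2 : 0 < Ω x - x := by simpa [h0] using hsd hxm hctm hx.2
        exact mul_pos (mul_pos hnpos (hf x)) hpos2
    exact hmono
  · apply strictAntiOn_of_deriv_neg (convex_Icc ct chigh)
    · exact fun x _ => ((hW' x).differentiableAt.continuousAt).continuousWithinAt
    · intro x hx
      rw [interior_Icc] at hx
      rw [(hW' x).deriv]
      have hxm : x ∈ Set.Icc (0:ℝ) chigh := ⟨le_trans hct0 (le_of_lt hx.1), le_of_lt hx.2⟩
      have hctm : ct ∈ Set.Icc (0:ℝ) chigh := ⟨hct0, hcth⟩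
      have h0 : Ω ct - ct = 0 := by rw [hfix]; ring
      have hneg : Ω x - x < 0 := by simpa [h0] using hsd hctm hxm hx.1
      have : 0 < (n:ℝ) * f x := mul_pos hnpos (hf x)
      exact mul_neg_of_pos_of_neg this hneg
  · -- max
    intro ca hca0 hcah
    have hmono : StrictMonoOn W (Set.Icc 0 ct) := by
      apply strictMonoOn_of_deriv_pos (convex_Icc 0 ct)
      · exact fun x _ => ((hW' x).differentiableAt.continuousAt).continuousWithinAt
      · intro x hx
        rw [interior_Icc] at hx
        rw [(hW' x).deriv]
        have hxm : x ∈ Set.Icc (0:ℝ) chigh := ⟨le_of_lt hx.1, le_trans (le_of_lt hx.2) hcth⟩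
        have hctm : ct ∈ Set.Icc (0:ℝ) chigh := ⟨hct0, hcth⟩
        have h0 : Ω ct - ct = 0 := by rw [hfix]; ring
        have hpos2 : 0 < Ω x - x := by simpa [h0] using hsd hxm hctm hx.2
        exact mul_pos (mul_pos hnpos (hf x)) hpos2
    have hanti : StrictAntiOn W (Set.Icc ct chigh) := by
      apply strictAntiOn_of_deriv_neg (convex_Icc ct chigh)
      · exact fun x _ => ((hW' x).differentiableAt.continuousAt).continuousWithinAt
      · intro x hx
        rw [interior_Icc] at hx
        rw [(hW' x).deriv]
        have hxm : x ∈ Set.Icc (0:ℝ) chigh := ⟨le_trans hct0 (le_of_lt hx.1), le_of_lt hx.2⟩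
        have hctm : ct ∈ Set.Icc (0:ℝ) chigh := ⟨hct0, hcth⟩
        have h0 : Ω ct - ct = 0 := by rw [hfix]; ring
        have hneg : Ω x - x < 0 := by simpa [h0] using hsd hctm hxm hx.1
        have : 0 < (n:ℝ) * f x := mul_pos hnpos (hf x)
        exact mul_neg_of_pos_of_neg this hneg
    rw [isMaxOn_iff]
    intro x hx
    rcases le_total ct ca with hle | hle
    · rw [min_eq_left hle]
      rcases le_or_gt x ct with hxct | hxct
      · exact hmono.monotoneOn ⟨hx.1, hxct⟩ ⟨hct0, le_refl ct⟩ hxct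
      · exact le_of_lt (hanti ⟨le_refl ct, hcth⟩ ⟨le_of_lt hxct, le_trans hx.2 hcah⟩ hxct)
    · rw [min_eq_right hle]
      exact hmono.monotoneOn ⟨hx.1, le_trans hx.2 hle⟩ ⟨hca0, hle⟩ hx.2
end

section
/- Consider the designer's problem with K artificial bugs: if (v*, v_a*, q_a*) with prizes v_a* = (v_a^{1*},…,v_a^{K*}) ≥ 0 and complexities q_a* ∈ [0,1]^K attains designer payoff U by inducing equilibrium threshold c*, then there exists an alternative choice with a single artificial bug — complexity q_a^{1**} = max_k q_a^{k*} and prize v_a^{1**} = v_a^{k̃*} + Σ_{k≠k̃} v_a^{k*} P(c*; q_a^{k*}) / P(c*; q_a^{1**}) where k̃ = argmax_k q_a^{k*} — that induces the same equilibrium threshold c*, yields the same designer payoff, and satisfies the budget constraint Σ_l v^l + v_a^{1**} ≤ Σ_l v^l + Σ_k v_a^{k*}. -/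
/-!
Merging all artificial bugs into the most complex one, and scaling its prize so that
`v₁ · P(q_max) = Σₖ vₖ · P(qₖ)`, leaves both the expected prize outlay and, since `Φ = P / (n F)`,
every agent's expected artificial-bug reward unchanged; hence the threshold and the payoff are
unchanged. Because `P` is increasing in the complexity, each rescaled prize `vₖ P(qₖ) / P(q_max)`
is at most `vₖ`, which gives the budget inequality.
-/

open Finset

lemma one_sub_one_sub_pow_le_of_le {x y : ℝ} (hxy : x ≤ y) (hy : y ≤ 1) (n : ℕ) :
    1 - (1 - x) ^ n ≤ 1 - (1 - y) ^ n := by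
  have := pow_le_pow_left₀ (sub_nonneg.2 hy) (sub_le_sub_left hxy 1) n
  linarith

lemma one_sub_one_sub_pow_nonneg {x : ℝ} (hx0 : 0 ≤ x) (hx1 : x ≤ 1) (n : ℕ) :
    0 ≤ 1 - (1 - x) ^ n := by
  simpa using one_sub_one_sub_pow_le_of_le hx0 hx1 n

lemma one_sub_one_sub_pow_pos {x : ℝ} (hx0 : 0 < x) (hx1 : x ≤ 1) {n : ℕ} (hn : n ≠ 0) :
    0 < 1 - (1 - x) ^ n := by
  have := pow_lt_one₀ (sub_nonneg.2 hx1) (sub_lt_self 1 hx0) hn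
  linarith

section Consolidation

variable {ι : Type*} [Fintype ι] [DecidableEq ι] (a f : ι → ℝ) (i : ι)

noncomputable def consolidatedWeight : ℝ :=
  a i + (∑ k ∈ univ.erase i, a k * f k) / f i

lemma consolidatedWeight_mul {f : ι → ℝ} {i : ι} (hfi : f i ≠ 0) :
    consolidatedWeight a f i * f i = ∑ k, a k * f k := by
  rw [consolidatedWeight, add_mul, div_mul_cancel₀ _ hfi, ← add_sum_erase _ _ (mem_univ i)]

variable {a f i}

lemma consolidatedWeight_nonneg (ha : ∀ k, 0 ≤ a k) (hf : ∀ k, 0 ≤ f k) :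
    0 ≤ consolidatedWeight a f i :=
  add_nonneg (ha i) <| div_nonneg (sum_nonneg fun k _ => mul_nonneg (ha k) (hf k)) (hf i)

lemma consolidatedWeight_le_sum (ha : ∀ k, 0 ≤ a k) (hfi : 0 < f i) (hmax : ∀ k, f k ≤ f i) :
    consolidatedWeight a f i ≤ ∑ k, a k := by
  have hrest : (∑ k ∈ univ.erase i, a k * f k) / f i ≤ ∑ k ∈ univ.erase i, a k := by
    rw [div_le_iff₀ hfi, sum_mul]
    exact sum_le_sum fun k _ => mul_le_mul_of_nonneg_left (hmax k) (ha k)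
  rw [consolidatedWeight, ← add_sum_erase _ _ (mem_univ i)]
  linarith

end Consolidation

theorem stmt_14_general (n : ℕ) (hn : 1 ≤ n)
    (p : ℝ) (hp0 : 0 < p) (hp1 : p ≤ 1)
    (L K : ℕ)
    (v w μ q : Fin L → ℝ) (va qa : Fin K → ℝ)
    (hva : ∀ k, 0 ≤ va k)
    (hqa : ∀ k, qa k ∈ Set.Icc (0 : ℝ) 1)
    (P Φ : ℝ → ℝ)
    (hP : ∀ r, P r = 1 - (1 - r * p) ^ n)
    (hΦ : ∀ r, Φ r = P r / (n * p))
    (cstar : ℝ)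
    (heq : cstar = ∑ l, v l * μ l * Φ (q l) + ∑ k, va k * Φ (qa k))
    (kt : Fin K) (hkt : ∀ k, qa k ≤ qa kt) (hqkt : 0 < qa kt) :
    ∃ va1 : ℝ,
      va1 = va kt + (∑ k ∈ Finset.univ.erase kt, va k * P (qa k)) / P (qa kt) ∧
      0 ≤ va1 ∧
      cstar = ∑ l, v l * μ l * Φ (q l) + va1 * Φ (qa kt) ∧
      (∑ l, (w l - v l) * μ l * P (q l)) - va1 * P (qa kt) =
        (∑ l, (w l - v l) * μ l * P (q l)) - ∑ k, va k * P (qa k) ∧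
      (∑ l, v l) + va1 ≤ (∑ l, v l) + ∑ k, va k := by
  have hqap_le_one : ∀ k, qa k * p ≤ 1 := fun k => mul_le_one₀ (hqa k).2 hp0.le hp1
  have hP_nonneg : ∀ k, 0 ≤ P (qa k) := fun k => by
    rw [hP]
    exact one_sub_one_sub_pow_nonneg (mul_nonneg (hqa k).1 hp0.le) (hqap_le_one k) n
  have hP_pos : 0 < P (qa kt) := by
    rw [hP]
    exact one_sub_one_sub_pow_pos (mul_pos hqkt hp0) (hqap_le_one kt) (by omega)
  have hP_le : ∀ k, P (qa k) ≤ P (qa kt) := fun k => by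
    rw [hP, hP]
    exact one_sub_one_sub_pow_le_of_le (mul_le_mul_of_nonneg_right (hkt k) hp0.le)
      (hqap_le_one kt) n
  have hmerge := consolidatedWeight_mul va hP_pos.ne' (f := fun k => P (qa k))
  refine ⟨consolidatedWeight va (fun k => P (qa k)) kt, rfl,
    consolidatedWeight_nonneg hva hP_nonneg, ?_, by rw [hmerge],
    by linarith [consolidatedWeight_le_sum hva hP_pos hP_le]⟩
  simp_rw [heq, hΦ, ← mul_div_assoc, ← sum_div, hmerge]

/-- It suffices to insert one artificial bug: given an equilibrium with K artificial
bugs, the single artificial bug of maximal complexity with the adjusted prize induces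
the same equilibrium threshold, yields the same designer payoff, and respects the
budget. Here p = F(c*) ∈ (0,1] is the equilibrium participation probability. -/
theorem stmt_14 (n : ℕ) (hn : 1 ≤ n)
    (p : ℝ) (hp0 : 0 < p) (hp1 : p ≤ 1)
    (L K : ℕ) (hK : 1 ≤ K)
    (v w μ q : Fin L → ℝ) (va qa : Fin K → ℝ)
    (hv : ∀ l, 0 ≤ v l) (hva : ∀ k, 0 ≤ va k)
    (hμ : ∀ l, μ l ∈ Set.Ioc (0 : ℝ) 1)
    (hq : ∀ l, q l ∈ Set.Ioc (0 : ℝ) 1)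
    (hqa : ∀ k, qa k ∈ Set.Icc (0 : ℝ) 1)
    (P Φ : ℝ → ℝ)
    (hP : ∀ r, P r = 1 - (1 - r * p) ^ n)
    (hΦ : ∀ r, Φ r = P r / (n * p))
    (cstar : ℝ)
    (heq : cstar = ∑ l, v l * μ l * Φ (q l) + ∑ k, va k * Φ (qa k))
    (kt : Fin K) (hkt : ∀ k, qa k ≤ qa kt) (hqkt : 0 < qa kt) :
    ∃ va1 : ℝ,
      va1 = va kt + (∑ k ∈ Finset.univ.erase kt, va k * P (qa k)) / P (qa kt) ∧
      0 ≤ va1 ∧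
      cstar = ∑ l, v l * μ l * Φ (q l) + va1 * Φ (qa kt) ∧
      (∑ l, (w l - v l) * μ l * P (q l)) - va1 * P (qa kt) =
        (∑ l, (w l - v l) * μ l * P (q l)) - ∑ k, va k * P (qa k) ∧
      (∑ l, v l) + va1 ≤ (∑ l, v l) + ∑ k, va k :=
  stmt_14_general n hn p hp0 hp1 L K v w μ q va qa hva hqa P Φ hP hΦ cstar heq kt hkt hqkt
end

section
/- Let F be a continuous strictly increasing CDF on [c_low, c_high] with c_low > 0, and for each n let c_n ∈ (c_low, c_high] satisfy c_n · n F(c_n) = Σ_l v^l μ^l (1 - (1 - q^l F(c_n))^n) + v_a (1 - (1 - q_a F(c_n))^n), where the right-hand side is bounded by Σ_l v^l + v_a < ∞. Then c_n → c_low as n → ∞. -/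
open Filter Topology Set

/- The right-hand side of the equilibrium equation is at most `B = ∑ v^l μ^l + v_a`, and
`c_n ≥ c_low > 0`, so `n F(c_n) ≤ B / c_low`. Hence `F(c_n) → 0 = F(c_low)`, and strict
monotonicity of `F` forces `c_n → c_low`. -/

theorem StrictMonoOn.tendsto_left_of_tendsto_comp {α β ι : Type*}
    [LinearOrder α] [TopologicalSpace α] [OrderTopology α]
    [LinearOrder β] [TopologicalSpace β] [OrderTopology β]
    {f : α → β} {a b : α} (hf : StrictMonoOn f (Icc a b)) {l : Filter ι} {u : ι → α}
    (hu : ∀ i, u i ∈ Icc a b) (hfu : Tendsto (f ∘ u) l (𝓝 (f a))) :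
    Tendsto u l (𝓝 a) := by
  refine tendsto_order.2 ⟨fun a' ha' => Eventually.of_forall fun i => ha'.trans_le (hu i).1,
    fun a' ha' => ?_⟩
  rcases le_or_gt a' b with hab | hba
  · have hfa : f a < f a' := hf (left_mem_Icc.2 (ha'.le.trans hab)) ⟨ha'.le, hab⟩ ha'
    filter_upwards [(tendsto_order.1 hfu).2 _ hfa] with i hi
    exact (hf.lt_iff_lt (hu i) ⟨ha'.le, hab⟩).1 hi
  · exact Eventually.of_forall fun i => (hu i).2.trans_lt hba

theorem tendsto_zero_of_natCast_mul_le {u : ℕ → ℝ} {K : ℝ} (h0 : ∀ n, 0 ≤ u n)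
    (hK : ∀ n : ℕ, (n : ℝ) * u n ≤ K) : Tendsto u atTop (𝓝 0) := by
  refine squeeze_zero' (Eventually.of_forall h0) ?_ (tendsto_const_div_atTop_nhds_zero_nat K)
  filter_upwards [eventually_gt_atTop 0] with n hn
  rw [le_div_iff₀ (Nat.cast_pos.2 hn), mul_comm]
  exact hK n

theorem mul_one_sub_one_sub_pow_le {w p : ℝ} (hw : 0 ≤ w) (hp : p ≤ 1) (n : ℕ) :
    w * (1 - (1 - p) ^ n) ≤ w :=
  mul_le_of_le_one_right hw (sub_le_self _ (pow_nonneg (sub_nonneg.2 hp) n))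

theorem stmt_16_general (clow chigh : ℝ) (hclow : 0 < clow)
    (F : ℝ → ℝ)
    (hFmono : StrictMonoOn F (Set.Icc clow chigh))
    (hFrange : ∀ x ∈ Set.Icc clow chigh, F x ∈ Set.Icc (0 : ℝ) 1)
    (hF0 : F clow = 0)
    (L : ℕ) (v μ q : Fin L → ℝ) (va qa : ℝ)
    (hv : ∀ l, 0 ≤ v l) (hva : 0 ≤ va)
    (hμ : ∀ l, μ l ∈ Set.Ioc (0 : ℝ) 1)
    (hq : ∀ l, q l ∈ Set.Ioc (0 : ℝ) 1) (hqa : qa ∈ Set.Ioc (0 : ℝ) 1)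
    (c : ℕ → ℝ)
    (hmem : ∀ n : ℕ, c n ∈ Set.Ioc clow chigh)
    (heq : ∀ n : ℕ, c n * ((n : ℝ) * F (c n)) =
        ∑ l, v l * μ l * (1 - (1 - q l * F (c n)) ^ n) +
          va * (1 - (1 - qa * F (c n)) ^ n)) :
    Filter.Tendsto c Filter.atTop (nhds clow) := by
  have hc : ∀ n, c n ∈ Icc clow chigh := fun n => Ioc_subset_Icc_self (hmem n)
  have hF : ∀ n, F (c n) ∈ Icc (0 : ℝ) 1 := fun n => hFrange _ (hc n)
  have hbound : ∀ n : ℕ, (n : ℝ) * F (c n) ≤ (∑ l, v l * μ l + va) / clow := by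
    intro n
    rw [le_div_iff₀' hclow]
    calc clow * ((n : ℝ) * F (c n))
        ≤ c n * ((n : ℝ) * F (c n)) :=
          mul_le_mul_of_nonneg_right (hc n).1 (mul_nonneg n.cast_nonneg (hF n).1)
      _ ≤ ∑ l, v l * μ l + va := by
          rw [heq n]
          refine add_le_add (Finset.sum_le_sum fun l _ => ?_) ?_
          · exact mul_one_sub_one_sub_pow_le (mul_nonneg (hv l) (hμ l).1.le)
              (mul_le_one₀ (hq l).2 (hF n).1 (hF n).2) n
          · exact mul_one_sub_one_sub_pow_le hva (mul_le_one₀ hqa.2 (hF n).1 (hF n).2) n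
  have hFc : Tendsto (F ∘ c) atTop (𝓝 (F clow)) :=
    hF0 ▸ tendsto_zero_of_natCast_mul_le (fun n => (hF n).1) hbound
  exact hFmono.tendsto_left_of_tendsto_comp hc hFc

/-- The equilibrium thresholds c_n of the private program converge to the lowest
cost c_low as the number of agents n tends to infinity. -/
theorem stmt_16 (clow chigh : ℝ) (hclow : 0 < clow) (hlt : clow < chigh)
    (F : ℝ → ℝ) (hFcont : ContinuousOn F (Set.Icc clow chigh))
    (hFmono : StrictMonoOn F (Set.Icc clow chigh))
    (hFrange : ∀ x ∈ Set.Icc clow chigh, F x ∈ Set.Icc (0 : ℝ) 1)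
    (hF0 : F clow = 0) (hF1 : F chigh = 1)
    (L : ℕ) (v μ q : Fin L → ℝ) (va qa : ℝ)
    (hv : ∀ l, 0 ≤ v l) (hva : 0 ≤ va)
    (hμ : ∀ l, μ l ∈ Set.Ioc (0 : ℝ) 1)
    (hq : ∀ l, q l ∈ Set.Ioc (0 : ℝ) 1) (hqa : qa ∈ Set.Ioc (0 : ℝ) 1)
    (c : ℕ → ℝ)
    (hmem : ∀ n : ℕ, c n ∈ Set.Ioc clow chigh)
    (heq : ∀ n : ℕ, c n * ((n : ℝ) * F (c n)) =
        ∑ l, v l * μ l * (1 - (1 - q l * F (c n)) ^ n) +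
          va * (1 - (1 - qa * F (c n)) ^ n)) :
    Filter.Tendsto c Filter.atTop (nhds clow) :=
  stmt_16_general clow chigh hclow F hFmono hFrange hF0 L v μ q va qa hv hva hμ hq hqa c hmem heq
end
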